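/- Let R be a commutative ring, 𝔗 a torsion theory over R, and {F^i}_{i≥0} a negative strongly connected sequence of covariant functors on R-modules having the 𝔗-restriction property. Let C_•: 0 → C_s → C_{s−1} → ⋯ → C_1 → C_0 → 0 be a complex of R-modules such that for all 1 ≤ i ≤ s: (i) F^j(C_i) ∈ 𝔗 for all j < i (i.e., F^−(C_i) ≥ i), and (ii) either H_i(C_•) ∈ 𝔗 or F^0(H_i(C_•)) ∉ 𝔗 (i.e., F^−(H_i(C_•)) = 0). Then H_i(C_•) ∈ 𝔗 for all 1 ≤ i ≤ s. -/

import Mathlib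

open CategoryTheory

universe u

noncomputable section

/-- A torsion theory over `R`: a class of `R`-modules closed under isomorphism, submodules,
quotient modules, extensions, and directed colimits (formulated as closure under directed
unions of submodules). -/
structure IsTorsionTheory (R : Type u) [CommRing R] (T : Set (ModuleCat.{u} R)) : Prop where
  mem_of_iso : ∀ {N N' : ModuleCat.{u} R}, (N ≅ N') → N ∈ T → N' ∈ T
  submodule_mem : ∀ {N : ModuleCat.{u} R}, N ∈ T → ∀ S : Submodule R N,
    ModuleCat.of R S ∈ T
  quotient_mem : ∀ {N : ModuleCat.{u} R}, N ∈ T → ∀ S : Submodule R N,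
    ModuleCat.of R (N ⧸ S) ∈ T
  ext_mem : ∀ {N : ModuleCat.{u} R} (S : Submodule R N),
    ModuleCat.of R S ∈ T → ModuleCat.of R (N ⧸ S) ∈ T → N ∈ T
  directed_mem : ∀ {N : ModuleCat.{u} R} {ι : Type u} [Nonempty ι] (S : ι → Submodule R N),
    Directed (· ≤ ·) S → (∀ i, ModuleCat.of R (S i) ∈ T) → iSup S = ⊤ → N ∈ T

/-- A negative strongly connected sequence of covariant functors on `R`-modules:
a sequence of additive functors `F i` together with connecting homomorphisms turning every
short exact sequence `0 → A → B → C → 0` into a long exact sequence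
`0 → F 0 A → F 0 B → F 0 C → F 1 A → F 1 B → F 1 C → ⋯`. -/
structure NegStronglyConnectedSeq (R : Type u) [CommRing R] where
  F : ℕ → ModuleCat.{u} R ⥤ ModuleCat.{u} R
  additive : ∀ i, (F i).Additive
  δ : ∀ ⦃A B C : ModuleCat.{u} R⦄ (f : A ⟶ B) (g : B ⟶ C),
    Function.Injective f → Function.Surjective g → Function.Exact f g →
    ∀ i : ℕ, ((F i).obj C ⟶ (F (i + 1)).obj A)
  injective_first : ∀ ⦃A B C : ModuleCat.{u} R⦄ (f : A ⟶ B) (g : B ⟶ C)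
    (hf : Function.Injective f) (hg : Function.Surjective g) (hfg : Function.Exact f g),
    Function.Injective ((F 0).map f)
  exact_map_map : ∀ ⦃A B C : ModuleCat.{u} R⦄ (f : A ⟶ B) (g : B ⟶ C)
    (hf : Function.Injective f) (hg : Function.Surjective g) (hfg : Function.Exact f g)
    (i : ℕ), Function.Exact ((F i).map f) ((F i).map g)
  exact_map_δ : ∀ ⦃A B C : ModuleCat.{u} R⦄ (f : A ⟶ B) (g : B ⟶ C)
    (hf : Function.Injective f) (hg : Function.Surjective g) (hfg : Function.Exact f g)
    (i : ℕ), Function.Exact ((F i).map g) (δ f g hf hg hfg i)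
  exact_δ_map : ∀ ⦃A B C : ModuleCat.{u} R⦄ (f : A ⟶ B) (g : B ⟶ C)
    (hf : Function.Injective f) (hg : Function.Surjective g) (hfg : Function.Exact f g)
    (i : ℕ), Function.Exact (δ f g hf hg hfg i) ((F (i + 1)).map f)

/-- The `𝔗`-restriction property for a sequence of functors: `F i` maps modules of `𝔗`
to modules of `𝔗`. -/
def NegStronglyConnectedSeq.HasRestriction {R : Type u} [CommRing R]
    (Fs : NegStronglyConnectedSeq R) (T : Set (ModuleCat.{u} R)) : Prop :=
  ∀ N ∈ T, ∀ i : ℕ, (Fs.F i).obj N ∈ T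

/-- The homology of a complex `⋯ → C (i+2) → C (i+1) → C i → ⋯` at the spot `i + 1`. -/
abbrev homologyAt {R : Type u} [CommRing R] {C : ℕ → ModuleCat.{u} R}
    (d : ∀ i : ℕ, C (i + 1) ⟶ C i) (i : ℕ) : Type u :=
  ↥(LinearMap.ker (d i).hom) ⧸
    (Submodule.comap (LinearMap.ker (d i).hom).subtype (LinearMap.range (d (i + 1)).hom))

/-!
Write `Z_m = ker d_m`, `B_m = im d_{m+1}` and `H_m = Z_m / B_m`, and induct downwards on the degree.
If the homology above degree `t` lies in `𝔗`, the short exact sequences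
`0 → Z_m → C_{m+1} → im d_m → 0` and `0 → B_m → Z_m → H_m → 0`, read through the long exact
sequences of `F^•`, give `F^l(im d_m) ∈ 𝔗` for `t < m` and `l ≤ m`, starting from `im d_m = 0`
for `m ≥ s`. In degree `t` they then give `F^0(Z_t) ∈ 𝔗` (it embeds in `F^0(C_{t+1})`) and
`F^1(B_t) ∈ 𝔗`, hence `F^0(H_t) ∈ 𝔗`, and the alternative (ii) forces `H_t ∈ 𝔗`.
-/

namespace IsTorsionTheory

variable {R : Type u} [CommRing R] {T : Set (ModuleCat.{u} R)}

lemma mem_of_linearEquiv (hT : IsTorsionTheory R T)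
    {M N : Type u} [AddCommGroup M] [Module R M] [AddCommGroup N] [Module R N]
    (e : M ≃ₗ[R] N) (h : ModuleCat.of R M ∈ T) : ModuleCat.of R N ∈ T :=
  hT.mem_of_iso e.toModuleIso h

lemma mem_of_subsingleton (hT : IsTorsionTheory R T) (hne : T.Nonempty)
    (N : ModuleCat.{u} R) [Subsingleton N] : N ∈ T := by
  obtain ⟨M, hM⟩ := hne
  exact hT.mem_of_linearEquiv (LinearEquiv.ofSubsingleton _ N) (hT.submodule_mem hM ⊥)

lemma mem_of_injective (hT : IsTorsionTheory R T)
    {A B : ModuleCat.{u} R} (f : A ⟶ B) (hf : Function.Injective f) (hB : B ∈ T) : A ∈ T :=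
  hT.mem_of_linearEquiv (LinearEquiv.ofInjective f.hom hf).symm (hT.submodule_mem hB _)

lemma mem_of_exact (hT : IsTorsionTheory R T)
    {A B C : ModuleCat.{u} R} (f : A ⟶ B) (g : B ⟶ C)
    (h : Function.Exact f g) (hA : A ∈ T) (hC : C ∈ T) : B ∈ T := by
  have hker : LinearMap.ker g.hom = LinearMap.range f.hom := LinearMap.exact_iff.mp h
  refine hT.ext_mem (LinearMap.ker g.hom) ?_ ?_
  · rw [hker]
    exact hT.mem_of_linearEquiv (LinearMap.quotKerEquivRange f.hom) (hT.quotient_mem hA _)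
  · exact hT.mem_of_linearEquiv (LinearMap.quotKerEquivRange g.hom).symm
      (hT.submodule_mem hC _)

end IsTorsionTheory

namespace NegStronglyConnectedSeq

variable {R : Type u} [CommRing R] {T : Set (ModuleCat.{u} R)} (Fs : NegStronglyConnectedSeq R)
  (hT : IsTorsionTheory R T) {M : Type u} [AddCommGroup M] [Module R M] (S : Submodule R M)

include hT in
lemma obj_zero_submodule_mem (hM : (Fs.F 0).obj (ModuleCat.of R M) ∈ T) :
    (Fs.F 0).obj (ModuleCat.of R S) ∈ T :=
  hT.mem_of_injective _ (Fs.injective_first (ModuleCat.ofHom S.subtype) (ModuleCat.ofHom S.mkQ)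
    S.injective_subtype S.mkQ_surjective (LinearMap.exact_subtype_mkQ S)) hM

include hT in
lemma obj_mem_of_submodule_of_quotient {l : ℕ} (hS : (Fs.F l).obj (ModuleCat.of R S) ∈ T)
    (hQ : (Fs.F l).obj (ModuleCat.of R (M ⧸ S)) ∈ T) :
    (Fs.F l).obj (ModuleCat.of R M) ∈ T :=
  hT.mem_of_exact _ _ (Fs.exact_map_map (ModuleCat.ofHom S.subtype) (ModuleCat.ofHom S.mkQ)
    S.injective_subtype S.mkQ_surjective (LinearMap.exact_subtype_mkQ S) l) hS hQ

include hT in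
lemma obj_quotient_mem {l : ℕ} (hM : (Fs.F l).obj (ModuleCat.of R M) ∈ T)
    (hS : (Fs.F (l + 1)).obj (ModuleCat.of R S) ∈ T) :
    (Fs.F l).obj (ModuleCat.of R (M ⧸ S)) ∈ T :=
  hT.mem_of_exact _ _ (Fs.exact_map_δ (ModuleCat.ofHom S.subtype) (ModuleCat.ofHom S.mkQ)
    S.injective_subtype S.mkQ_surjective (LinearMap.exact_subtype_mkQ S) l) hM hS

end NegStronglyConnectedSeq

section Complex

variable {R : Type u} [CommRing R] {T : Set (ModuleCat.{u} R)} (hT : IsTorsionTheory R T)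
  (Fs : NegStronglyConnectedSeq R) {C : ℕ → ModuleCat.{u} R} {d : ∀ i : ℕ, C (i + 1) ⟶ C i}

lemma range_le_ker (hdd : ∀ i : ℕ, d (i + 1) ≫ d i = 0) (i : ℕ) :
    LinearMap.range (d (i + 1)).hom ≤ LinearMap.ker (d i).hom := by
  rintro _ ⟨y, rfl⟩
  exact congr($(hdd i).hom y)

/-- The boundaries `B_i ⊆ Z_i`, whose quotient is `homologyAt d i`, are the image of `d (i + 1)`. -/
def boundariesEquivRange (hdd : ∀ i : ℕ, d (i + 1) ≫ d i = 0) (i : ℕ) :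
    Submodule.comap (LinearMap.ker (d i).hom).subtype (LinearMap.range (d (i + 1)).hom) ≃ₗ[R]
      LinearMap.range (d (i + 1)).hom :=
  Submodule.comapSubtypeEquivOfLe (range_le_ker hdd i)

include hT in
lemma obj_range_mem_of_obj_ker_mem {l i : ℕ} (hC : (Fs.F l).obj (C (i + 1)) ∈ T)
    (hZ : (Fs.F (l + 1)).obj (ModuleCat.of R (LinearMap.ker (d i).hom)) ∈ T) :
    (Fs.F l).obj (ModuleCat.of R (LinearMap.range (d i).hom)) ∈ T :=
  hT.mem_of_iso ((Fs.F l).mapIso (LinearMap.quotKerEquivRange (d i).hom).toModuleIso)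
    (Fs.obj_quotient_mem hT _ hC hZ)

include hT in
lemma obj_range_mem_of_succ (hdd : ∀ i : ℕ, d (i + 1) ≫ d i = 0)
    (hres : Fs.HasRestriction T) {m : ℕ} (hC : ∀ l ≤ m, (Fs.F l).obj (C (m + 1)) ∈ T)
    (hH : ModuleCat.of R (homologyAt d m) ∈ T)
    (hIm : ∀ l ≤ m + 1, (Fs.F l).obj (ModuleCat.of R (LinearMap.range (d (m + 1)).hom)) ∈ T) :
    ∀ l ≤ m, (Fs.F l).obj (ModuleCat.of R (LinearMap.range (d m).hom)) ∈ T := by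
  intro l hl
  have hB := hT.mem_of_iso ((Fs.F (l + 1)).mapIso (boundariesEquivRange hdd m).symm.toModuleIso)
    (hIm (l + 1) (by omega))
  have hZ := Fs.obj_mem_of_submodule_of_quotient hT _ hB (hres _ hH (l + 1))
  exact obj_range_mem_of_obj_ker_mem hT Fs (hC l hl) hZ

include hT in
lemma obj_range_mem_of_subsingleton (hne : T.Nonempty) (hres : Fs.HasRestriction T) {m : ℕ}
    [Subsingleton (C (m + 1))] (l : ℕ) :
    (Fs.F l).obj (ModuleCat.of R (LinearMap.range (d m).hom)) ∈ T := by
  have : Subsingleton (LinearMap.range (d m).hom) :=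
    ⟨fun ⟨_, x, hx⟩ ⟨_, y, hy⟩ => by simp only [← hx, ← hy, Subsingleton.elim x y]⟩
  exact hres _ (hT.mem_of_subsingleton hne _) l

include hT in
lemma obj_range_mem (hdd : ∀ i : ℕ, d (i + 1) ≫ d i = 0) (hne : T.Nonempty)
    (hres : Fs.HasRestriction T) {s : ℕ} (htop : ∀ j : ℕ, s < j → Subsingleton (C j))
    (h1 : ∀ i : ℕ, 1 ≤ i → i ≤ s → ∀ j < i, (Fs.F j).obj (C i) ∈ T) {m : ℕ} (hm : m ≤ s)
    (hH : ∀ j, m ≤ j → j + 1 ≤ s → ModuleCat.of R (homologyAt d j) ∈ T) :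
    ∀ l ≤ m, (Fs.F l).obj (ModuleCat.of R (LinearMap.range (d m).hom)) ∈ T := by
  induction hm using Nat.decreasingInduction with
  | self =>
    have := htop (s + 1) (by omega)
    exact fun l _ => obj_range_mem_of_subsingleton hT Fs hne hres l
  | of_succ m hm ih =>
    exact obj_range_mem_of_succ hT Fs hdd hres (fun l hl => h1 (m + 1) (by omega) hm l (by omega))
      (hH m le_rfl hm) (ih fun j hj => hH j (by omega))

include hT in
lemma obj_zero_homology_mem (hdd : ∀ i : ℕ, d (i + 1) ≫ d i = 0) {t : ℕ}
    (hC : (Fs.F 0).obj (C (t + 1)) ∈ T)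
    (hIm : (Fs.F 1).obj (ModuleCat.of R (LinearMap.range (d (t + 1)).hom)) ∈ T) :
    (Fs.F 0).obj (ModuleCat.of R (homologyAt d t)) ∈ T := by
  have hZ := Fs.obj_zero_submodule_mem hT (LinearMap.ker (d t).hom) hC
  have hB := hT.mem_of_iso ((Fs.F 1).mapIso (boundariesEquivRange hdd t).symm.toModuleIso) hIm
  exact Fs.obj_quotient_mem hT _ hZ hB

end Complex

theorem homologyAt_mem_of_negStronglyConnectedSeq {R : Type u} [CommRing R]
    (T : Set (ModuleCat.{u} R)) (hT : IsTorsionTheory R T)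
    (Fs : NegStronglyConnectedSeq R) (hres : Fs.HasRestriction T)
    (s : ℕ) (C : ℕ → ModuleCat.{u} R) (d : ∀ i : ℕ, C (i + 1) ⟶ C i)
    (hdd : ∀ i : ℕ, d (i + 1) ≫ d i = 0)
    (htop : ∀ j : ℕ, s < j → Subsingleton (C j))
    (h1 : ∀ i : ℕ, 1 ≤ i → i ≤ s → ∀ j < i, (Fs.F j).obj (C i) ∈ T)
    (h2 : ∀ i : ℕ, i + 1 ≤ s → ModuleCat.of R (homologyAt d i) ∈ T ∨
      (Fs.F 0).obj (ModuleCat.of R (homologyAt d i)) ∉ T) :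
    ∀ i : ℕ, i + 1 ≤ s → ModuleCat.of R (homologyAt d i) ∈ T := by
  intro i hi
  have hne : T.Nonempty := ⟨_, h1 1 le_rfl (by omega) 0 Nat.one_pos⟩
  suffices h : ∀ t ≤ s, ∀ j, t ≤ j → j + 1 ≤ s → ModuleCat.of R (homologyAt d j) ∈ T from
    h 0 (Nat.zero_le s) i (Nat.zero_le i) hi
  intro t ht
  induction ht using Nat.decreasingInduction with
  | self => intro j _ _; omega
  | of_succ t ht ih =>
    intro j htj hjs
    obtain rfl | htj := htj.eq_or_lt
    · have hIm := obj_range_mem hT Fs hdd hne hres htop h1 ht ih 1 (by omega)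
      have hF0 := obj_zero_homology_mem hT Fs hdd (h1 (t + 1) (by omega) hjs 0 (by omega)) hIm
      exact (h2 t hjs).resolve_right (not_not_intro hF0)
    · exact ih j htj hjs
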